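/- arXiv:2505.15382 — 3 statements merged into one kernel-verified Lean document; each statement's English description precedes it below -/
import Mathlib

section
/- Under assumptions (1)–(4) and assumption (5a) — there exists t_ρ ∈ [0,1] with F_up(t_ρ) < 0 — if λ_ρ ∈ ℝ and u_ρ ∈ C([0,1]) with ‖u_ρ‖_∞ = ρ satisfy u_ρ(t) = λ_ρ ∫₀¹ k(t,s) f(s, u_ρ(s), H[u_ρ]) ds for all t ∈ [0,1], then |λ_ρ| ≤ −ρ / F_up(t_ρ). -/
/-!
Evaluate the eigenvalue equation at `t_ρ`. Since `‖u‖ = ρ`, both `u` and `H[u]` stay in the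
region where `f ≤ f_up`, so with `k ≥ 0` the integral `I` on the right is at most `F_up(t_ρ) < 0`.
Hence `|λ| · (-F_up(t_ρ)) ≤ |λ| · (-I) = |u(t_ρ)| ≤ ρ`.
-/

open MeasureTheory Set

theorem abs_le_neg_div_of_abs_mul_le {lam I F ρ : ℝ} (h : |lam * I| ≤ ρ) (hIF : I ≤ F)
    (hF : F < 0) : |lam| ≤ -ρ / F := by
  rw [le_div_iff_of_neg hF, neg_le]
  calc -(|lam| * F) = |lam| * -F := by ring
    _ ≤ |lam| * -I := mul_le_mul_of_nonneg_left (neg_le_neg hIF) (abs_nonneg lam)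
    _ = |lam * I| := by rw [abs_mul, abs_of_neg (hIF.trans_lt hF)]
    _ ≤ ρ := h

theorem mem_Icc_neg_of_norm_le {X : Type*} [TopologicalSpace X] [CompactSpace X]
    {u : C(X, ℝ)} {ρ : ℝ} (hu : ‖u‖ ≤ ρ) (x : X) : u x ∈ Icc (-ρ) ρ :=
  abs_le.mp ((u.norm_coe_le_norm x).trans hu)

theorem ContinuousOn.comp_prodMk_of_mapsTo {α β γ : Type*} [TopologicalSpace α]
    [TopologicalSpace β] [TopologicalSpace γ] {f : α → β → γ} {s : Set α} {t : Set β}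
    (hf : ContinuousOn (Function.uncurry f) (s ×ˢ t)) {g : α → β} (hg : ContinuousOn g s)
    (hgt : MapsTo g s t) : ContinuousOn (fun x => f x (g x)) s :=
  hf.comp (continuousOn_id.prodMk hg) fun _ hx => ⟨hx, hgt hx⟩

theorem intervalIntegral.integral_mul_le_integral_mul_of_nonneg {a b : ℝ} (hab : a ≤ b)
    {w g h : ℝ → ℝ} (hw : ContinuousOn w (Icc a b)) (hg : ContinuousOn g (Icc a b))
    (hh : ContinuousOn h (Icc a b)) (hw0 : ∀ s ∈ Icc a b, 0 ≤ w s)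
    (hgh : ∀ s ∈ Icc a b, g s ≤ h s) :
    ∫ s in a..b, w s * g s ≤ ∫ s in a..b, w s * h s := by
  rw [← uIcc_of_le hab] at hw hg hh
  exact integral_mono_on hab (hw.mul hg).intervalIntegrable (hw.mul hh).intervalIntegrable
    fun s hs => mul_le_mul_of_nonneg_left (hgh s hs) (hw0 s hs)

theorem hammerstein_eigenvalue_bound_5a_general
    (ρ : ℝ)
    (k : ℝ → ℝ → ℝ)
    (hk_cont : ContinuousOn (fun p : ℝ × ℝ => k p.1 p.2)
      (Set.Icc 0 1 ×ˢ Set.Icc 0 1))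
    (hk_nonneg : ∀ t ∈ Set.Icc (0:ℝ) 1, ∀ s ∈ Set.Icc (0:ℝ) 1, 0 ≤ k t s)
    (H : C(Set.Icc (0:ℝ) 1, ℝ) → ℝ)
    (Hlo Hup : ℝ)
    (hH_bd : ∀ u ∈ Metric.closedBall (0 : C(Set.Icc (0:ℝ) 1, ℝ)) ρ,
      Hlo ≤ H u ∧ H u ≤ Hup)
    (f : ℝ → ℝ → ℝ → ℝ)
    (hf_cont : ContinuousOn (fun p : ℝ × ℝ × ℝ => f p.1 p.2.1 p.2.2)
      (Set.Icc 0 1 ×ˢ Set.Icc (-ρ) ρ ×ˢ Set.Icc Hlo Hup))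
    (flo fup : ℝ → ℝ)
    (hfup_cont : ContinuousOn fup (Set.Icc 0 1))
    (hf_bd : ∀ t ∈ Set.Icc (0:ℝ) 1, ∀ u ∈ Set.Icc (-ρ) ρ, ∀ v ∈ Set.Icc Hlo Hup,
      flo t ≤ f t u v ∧ f t u v ≤ fup t)
    (tρ : ℝ) (htρ : tρ ∈ Set.Icc (0:ℝ) 1)
    (h5a : (∫ s in (0:ℝ)..1, k tρ s * fup s) < 0)
    (lam : ℝ) (u : C(Set.Icc (0:ℝ) 1, ℝ)) (hu : ‖u‖ = ρ)
    (heq : ∀ t : Set.Icc (0:ℝ) 1, u t =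
      lam * ∫ s in (0:ℝ)..1, k t s * f s (u (Set.projIcc 0 1 zero_le_one s)) (H u)) :
    |lam| ≤ -ρ / ∫ s in (0:ℝ)..1, k tρ s * fup s := by
  set v : ℝ → ℝ := fun s => u (projIcc 0 1 zero_le_one s)
  have hv : ∀ s, v s ∈ Icc (-ρ) ρ := fun s => mem_Icc_neg_of_norm_le hu.le _
  have hHu : H u ∈ Icc Hlo Hup := hH_bd u (mem_closedBall_zero_iff.mpr hu.le)
  have hfu_cont : ContinuousOn (fun s => f s (v s) (H u)) (Icc 0 1) :=
    ContinuousOn.comp_prodMk_of_mapsTo (f := fun (s : ℝ) (p : ℝ × ℝ) => f s p.1 p.2)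
      (t := Icc (-ρ) ρ ×ˢ Icc Hlo Hup) hf_cont
      ((u.continuous.comp continuous_projIcc).prodMk continuous_const).continuousOn
      fun s _ => ⟨hv s, hHu⟩
  have hI_le : ∫ s in (0:ℝ)..1, k tρ s * f s (v s) (H u) ≤ ∫ s in (0:ℝ)..1, k tρ s * fup s :=
    intervalIntegral.integral_mul_le_integral_mul_of_nonneg zero_le_one
      (hk_cont.uncurry_left tρ htρ) hfu_cont hfup_cont (hk_nonneg tρ htρ)
      fun s hs => (hf_bd s hs _ (hv s) _ hHu).2
  have hu_tρ : |lam * ∫ s in (0:ℝ)..1, k tρ s * f s (v s) (H u)| ≤ ρ := by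
    rw [← heq ⟨tρ, htρ⟩, ← hu]
    exact u.norm_coe_le_norm _
  exact abs_le_neg_div_of_abs_mul_le hu_tρ hI_le h5a

/-- Under assumptions (1)-(4) and (5a), any eigenvalue lam with eigenfunction of
sup-norm rho satisfies |lam| <= -rho / F_up(t_rho). -/
theorem hammerstein_eigenvalue_bound_5a
    (ρ : ℝ) (hρ : 0 < ρ)
    (k : ℝ → ℝ → ℝ)
    (hk_cont : ContinuousOn (fun p : ℝ × ℝ => k p.1 p.2)
      (Set.Icc 0 1 ×ˢ Set.Icc 0 1))
    (hk_nonneg : ∀ t ∈ Set.Icc (0:ℝ) 1, ∀ s ∈ Set.Icc (0:ℝ) 1, 0 ≤ k t s)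
    (H : C(Set.Icc (0:ℝ) 1, ℝ) → ℝ)
    (hH_cont : ContinuousOn H (Metric.closedBall 0 ρ))
    (Hlo Hup : ℝ)
    (hH_bd : ∀ u ∈ Metric.closedBall (0 : C(Set.Icc (0:ℝ) 1, ℝ)) ρ,
      Hlo ≤ H u ∧ H u ≤ Hup)
    (f : ℝ → ℝ → ℝ → ℝ)
    (hf_cont : ContinuousOn (fun p : ℝ × ℝ × ℝ => f p.1 p.2.1 p.2.2)
      (Set.Icc 0 1 ×ˢ Set.Icc (-ρ) ρ ×ˢ Set.Icc Hlo Hup))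
    (flo fup : ℝ → ℝ)
    (hflo_cont : ContinuousOn flo (Set.Icc 0 1))
    (hfup_cont : ContinuousOn fup (Set.Icc 0 1))
    (hf_bd : ∀ t ∈ Set.Icc (0:ℝ) 1, ∀ u ∈ Set.Icc (-ρ) ρ, ∀ v ∈ Set.Icc Hlo Hup,
      flo t ≤ f t u v ∧ f t u v ≤ fup t)
    (tρ : ℝ) (htρ : tρ ∈ Set.Icc (0:ℝ) 1)
    (h5a : (∫ s in (0:ℝ)..1, k tρ s * fup s) < 0)
    (lam : ℝ) (u : C(Set.Icc (0:ℝ) 1, ℝ)) (hu : ‖u‖ = ρ)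
    (heq : ∀ t : Set.Icc (0:ℝ) 1, u t =
      lam * ∫ s in (0:ℝ)..1, k t s * f s (u (Set.projIcc 0 1 zero_le_one s)) (H u)) :
    |lam| ≤ -ρ / ∫ s in (0:ℝ)..1, k tρ s * fup s :=
  hammerstein_eigenvalue_bound_5a_general ρ k hk_cont hk_nonneg H Hlo Hup hH_bd f hf_cont flo fup
    hfup_cont hf_bd tρ htρ h5a lam u hu heq
end

section
/- Let ρ > 0, let k(t,s) := min{t,s} on [0,1]², and define F_low(t) := e^{−2ρ} ∫₀^{2/3} k(t,s) sin((3π/2)s) ds + e^{2ρ} ∫_{2/3}^{1} k(t,s) sin((3π/2)s) ds. If 0 < ρ < (1/4)·ln 2, then, with t_ρ := (2/(3π))·arccos(e^{4ρ} − 1), one has F_low(t_ρ) > 0 and F_low(t_ρ) = max_{t ∈ [0,1]} F_low(t). If ρ ≥ (1/4)·ln 2, then F_low(t) ≤ 0 for every t ∈ [0,1]. -/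
/-!
Put `ω = 3π/2` and `x = ω t`. Evaluating the integrals shows that, up to the positive factor
`e^{-2ρ} / ω²`, `F_low(t)` equals `sin x - (e^{4ρ} - 1) x` for `t ∈ [0, 2/3]` (so `x ∈ [0, π]`)
and `e^{4ρ} sin x - (e^{4ρ} - 1) π < 0` for `t ∈ [2/3, 1]`, where `sin x ≤ 0`.
On `[0, π]` the sine is strictly concave, so `sin x - (cos x₀) x` is maximal at `x = x₀`, and
its value there exceeds its value `0` at `x = 0`; when `e^{4ρ} ≤ 2` we may take
`x₀ = arccos (e^{4ρ} - 1)`, which is `ω t_ρ`. When `e^{4ρ} ≥ 2` instead,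
`sin x ≤ x ≤ (e^{4ρ} - 1) x`.
-/

open MeasureTheory Set Real

theorem StrictConcaveOn.lt_add_mul_sub_of_hasDerivAt {S : Set ℝ} {f : ℝ → ℝ} {f' x y : ℝ}
    (hf : StrictConcaveOn ℝ S f) (hx : x ∈ S) (hy : y ∈ S) (hyx : y ≠ x)
    (hf' : HasDerivAt f f' x) : f y < f x + f' * (y - x) := by
  rcases hyx.lt_or_gt with hyx | hxy
  · have h := hf.lt_slope_of_hasDerivAt hy hx hyx hf'
    rw [slope_def_field, lt_div_iff₀ (sub_pos.2 hyx)] at h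
    linarith
  · have h := hf.slope_lt_of_hasDerivAt hx hy hxy hf'
    rw [slope_def_field, div_lt_iff₀ (sub_pos.2 hxy)] at h
    linarith

namespace Real

theorem sin_sub_cos_mul_le {x₀ x : ℝ} (hx₀ : x₀ ∈ Icc 0 π) (hx : x ∈ Icc 0 π) :
    sin x - cos x₀ * x ≤ sin x₀ - cos x₀ * x₀ := by
  rcases eq_or_ne x x₀ with rfl | hne
  · rfl
  have := strictConcaveOn_sin_Icc.lt_add_mul_sub_of_hasDerivAt hx₀ hx hne (hasDerivAt_sin x₀)
  linarith

theorem mul_cos_lt_sin {x : ℝ} (hx₀ : 0 < x) (hxπ : x ≤ π) : x * cos x < sin x := by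
  have := strictConcaveOn_sin_Icc.lt_add_mul_sub_of_hasDerivAt ⟨hx₀.le, hxπ⟩
    ⟨le_rfl, pi_pos.le⟩ hx₀.ne (hasDerivAt_sin x)
  rw [sin_zero] at this
  linarith

end Real

theorem integral_sin_mul {ω : ℝ} (hω : ω ≠ 0) (a b : ℝ) :
    ∫ s in a..b, sin (ω * s) = (cos (ω * a) - cos (ω * b)) / ω := by
  rw [intervalIntegral.integral_comp_mul_left (fun x => sin x) hω, integral_sin, smul_eq_mul,
    inv_mul_eq_div]

theorem integral_mul_sin_mul {ω : ℝ} (hω : ω ≠ 0) (a b : ℝ) :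
    ∫ s in a..b, s * sin (ω * s) =
      ((sin (ω * b) - ω * b * cos (ω * b)) - (sin (ω * a) - ω * a * cos (ω * a))) / ω ^ 2 := by
  have hderiv (x : ℝ) : HasDerivAt (fun s => (sin (ω * s) - ω * s * cos (ω * s)) / ω ^ 2)
      (x * sin (ω * x)) x := by
    have hlin : HasDerivAt (fun s => ω * s) ω x := by simpa using (hasDerivAt_id x).const_mul ω
    have := (((hasDerivAt_sin _).comp x hlin).sub
      (hlin.mul ((hasDerivAt_cos _).comp x hlin))).div_const (ω ^ 2)
    refine this.congr_deriv ?_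
    simp only [Function.comp_apply]
    field_simp
    ring
  rw [intervalIntegral.integral_eq_sub_of_hasDerivAt (fun x _ => hderiv x)
    ((by fun_prop : Continuous fun s => s * sin (ω * s)).intervalIntegrable a b)]
  ring

section IntegralMinMul

variable {g : ℝ → ℝ} {a b t : ℝ}

theorem integral_min_mul_of_le_left (hab : a ≤ b) (hta : t ≤ a) :
    ∫ s in a..b, min t s * g s = t * ∫ s in a..b, g s := by
  rw [← intervalIntegral.integral_const_mul]
  refine intervalIntegral.integral_congr fun s hs => ?_
  rw [uIcc_of_le hab] at hs
  simp only [min_eq_left (hta.trans hs.1)]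

theorem integral_min_mul_of_right_le (hab : a ≤ b) (hbt : b ≤ t) :
    ∫ s in a..b, min t s * g s = ∫ s in a..b, s * g s := by
  refine intervalIntegral.integral_congr fun s hs => ?_
  rw [uIcc_of_le hab] at hs
  simp only [min_eq_right (hs.2.trans hbt)]

theorem integral_min_mul_of_mem_Icc (hg : Continuous g) (ht : t ∈ Icc a b) :
    ∫ s in a..b, min t s * g s = (∫ s in a..t, s * g s) + t * ∫ s in t..b, g s := by
  have hint (u v : ℝ) : IntervalIntegrable (fun s => min t s * g s) volume u v :=
    (by fun_prop : Continuous fun s => min t s * g s).intervalIntegrable u v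
  rw [← intervalIntegral.integral_add_adjacent_intervals (hint a t) (hint t b),
    integral_min_mul_of_right_le ht.1 le_rfl, integral_min_mul_of_le_left ht.2 le_rfl]

end IntegralMinMul

noncomputable def FLow (ρ t : ℝ) : ℝ :=
  Real.exp (-(2*ρ)) * (∫ s in (0:ℝ)..(2/3), min t s * sin (3 * π / 2 * s)) +
    Real.exp (2*ρ) * ∫ s in (2/3:ℝ)..1, min t s * sin (3 * π / 2 * s)

noncomputable def peakTime (ρ : ℝ) : ℝ := 2 / (3 * π) * arccos (Real.exp (4*ρ) - 1)

theorem three_pi_div_two_mul_peakTime (ρ : ℝ) :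
    3 * π / 2 * peakTime ρ = arccos (Real.exp (4*ρ) - 1) := by
  rw [peakTime]
  field_simp

theorem three_pi_div_two_mul_mem_Icc_zero_pi {t : ℝ} (ht : t ∈ Icc 0 (2/3)) :
    3 * π / 2 * t ∈ Icc 0 π := by
  constructor <;> nlinarith [ht.1, ht.2, pi_pos]

theorem peakTime_mem_Icc (ρ : ℝ) : peakTime ρ ∈ Icc 0 (2/3) := by
  have hx : 3 * π / 2 * peakTime ρ ∈ Icc 0 π := by
    rw [three_pi_div_two_mul_peakTime]
    exact ⟨arccos_nonneg _, arccos_le_pi _⟩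
  constructor <;> nlinarith [hx.1, hx.2, pi_pos]

theorem exp_two_mul_eq_exp_neg_two_mul_mul (ρ : ℝ) :
    Real.exp (2*ρ) = Real.exp (-(2*ρ)) * Real.exp (4*ρ) := by
  rw [← Real.exp_add]
  ring_nf

theorem FLow_eq_of_le_two_thirds (ρ : ℝ) {t : ℝ} (ht : t ∈ Icc 0 (2/3)) :
    FLow ρ t = Real.exp (-(2*ρ)) / (3 * π / 2) ^ 2 *
      (sin (3 * π / 2 * t) - (Real.exp (4*ρ) - 1) * (3 * π / 2 * t)) := by
  have hω : 3 * π / 2 ≠ 0 := by positivity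
  rw [FLow, integral_min_mul_of_mem_Icc (by fun_prop) ht,
    integral_min_mul_of_le_left (by norm_num) ht.2, integral_mul_sin_mul hω,
    integral_sin_mul hω, integral_sin_mul hω, show 3 * π / 2 * (2/3 : ℝ) = π by ring,
    show 3 * π / 2 * (1 : ℝ) = π / 2 + π by ring, cos_add_pi,
    exp_two_mul_eq_exp_neg_two_mul_mul]
  simp only [mul_zero, sin_zero, cos_zero, cos_pi, cos_pi_div_two]
  field_simp
  ring

theorem FLow_eq_of_two_thirds_le (ρ : ℝ) {t : ℝ} (ht : t ∈ Icc (2/3) 1) :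
    FLow ρ t = Real.exp (-(2*ρ)) / (3 * π / 2) ^ 2 *
      (Real.exp (4*ρ) * sin (3 * π / 2 * t) - (Real.exp (4*ρ) - 1) * π) := by
  have hω : 3 * π / 2 ≠ 0 := by positivity
  rw [FLow, integral_min_mul_of_right_le (by norm_num) ht.1,
    integral_min_mul_of_mem_Icc (by fun_prop) ht, integral_mul_sin_mul hω,
    integral_mul_sin_mul hω, integral_sin_mul hω, show 3 * π / 2 * (2/3 : ℝ) = π by ring,
    show 3 * π / 2 * (1 : ℝ) = π / 2 + π by ring, cos_add_pi,
    exp_two_mul_eq_exp_neg_two_mul_mul]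
  simp only [mul_zero, sin_zero, cos_zero, cos_pi, sin_pi, cos_pi_div_two]
  field_simp
  ring

theorem FLow_neg_of_two_thirds_le {ρ t : ℝ} (hρ : 0 < ρ) (ht : t ∈ Icc (2/3) 1) :
    FLow ρ t < 0 := by
  have hsin : sin (3 * π / 2 * t) ≤ 0 := by
    have h := sin_nonneg_of_nonneg_of_le_pi (x := 3 * π / 2 * t - π)
      (by nlinarith [ht.1, pi_pos]) (by nlinarith [ht.2, pi_pos])
    rw [sin_sub_pi] at h
    linarith
  have hA : 1 < Real.exp (4*ρ) := one_lt_exp_iff.2 (by linarith)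
  rw [FLow_eq_of_two_thirds_le ρ ht]
  refine mul_neg_of_pos_of_neg (by positivity) ?_
  nlinarith [pi_pos, Real.exp_pos (4*ρ)]

theorem FLow_nonpos {ρ t : ℝ} (hρ : 1/4 * Real.log 2 ≤ ρ) (ht : t ∈ Icc 0 1) :
    FLow ρ t ≤ 0 := by
  rcases le_total t (2/3) with h | h
  · have hA : 2 ≤ Real.exp (4*ρ) := by
      rw [← exp_log two_pos, exp_le_exp]
      linarith
    have hx := three_pi_div_two_mul_mem_Icc_zero_pi ⟨ht.1, h⟩
    have hsin := sin_le hx.1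
    rw [FLow_eq_of_le_two_thirds ρ ⟨ht.1, h⟩]
    refine mul_nonpos_of_nonneg_of_nonpos (by positivity) ?_
    nlinarith [hx.1]
  · have hρ0 : 0 < ρ := lt_of_lt_of_le (by positivity) hρ
    exact (FLow_neg_of_two_thirds_le hρ0 ⟨h, ht.2⟩).le

theorem FLow_peakTime_pos {ρ : ℝ} (hρ : 0 < ρ) (hρ' : ρ < 1/4 * Real.log 2) :
    0 < FLow ρ (peakTime ρ) := by
  have hA : Real.exp (4*ρ) < 2 := by
    rw [← exp_log two_pos, exp_lt_exp]
    linarith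
  have hA' : 1 < Real.exp (4*ρ) := one_lt_exp_iff.2 (by linarith)
  have h := mul_cos_lt_sin (arccos_pos.2 (by linarith : Real.exp (4*ρ) - 1 < 1)) (arccos_le_pi _)
  rw [cos_arccos (by linarith) (by linarith)] at h
  rw [FLow_eq_of_le_two_thirds ρ (peakTime_mem_Icc ρ), three_pi_div_two_mul_peakTime]
  refine mul_pos (by positivity) ?_
  linarith

theorem isMaxOn_FLow_peakTime {ρ : ℝ} (hρ : 0 < ρ) (hρ' : ρ ≤ 1/4 * Real.log 2) :
    IsMaxOn (FLow ρ) (Icc 0 1) (peakTime ρ) := by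
  have hA : Real.exp (4*ρ) ≤ 2 := by
    rw [← exp_log two_pos, exp_le_exp]
    linarith
  have hA' : 1 < Real.exp (4*ρ) := one_lt_exp_iff.2 (by linarith)
  have hle : ∀ t ∈ Icc 0 (2/3), FLow ρ t ≤ FLow ρ (peakTime ρ) := by
    intro t ht
    have h := sin_sub_cos_mul_le (x₀ := arccos (Real.exp (4*ρ) - 1))
      ⟨arccos_nonneg _, arccos_le_pi _⟩ (three_pi_div_two_mul_mem_Icc_zero_pi ht)
    rw [cos_arccos (by linarith) (by linarith)] at h
    rw [FLow_eq_of_le_two_thirds ρ ht, FLow_eq_of_le_two_thirds ρ (peakTime_mem_Icc ρ),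
      three_pi_div_two_mul_peakTime]
    gcongr
  intro t ht
  rcases le_total t (2/3) with h | h
  · exact hle t ⟨ht.1, h⟩
  · calc FLow ρ t ≤ 0 := (FLow_neg_of_two_thirds_le hρ ⟨h, ht.2⟩).le
      _ = FLow ρ 0 := by simp [FLow_eq_of_le_two_thirds ρ (t := 0) ⟨le_rfl, by norm_num⟩]
      _ ≤ FLow ρ (peakTime ρ) := hle 0 ⟨le_rfl, by norm_num⟩

/-- For the mixed-BC Green's function k(t,s) = min(t,s): if 0 < rho < (1/4) ln 2
then F_low attains a positive maximum over [0,1] at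
t_rho = (2/(3 pi)) arccos(exp(4 rho) - 1); if rho >= (1/4) ln 2 then
F_low <= 0 on [0,1]. -/
theorem mixed_Flow_maximum
    (ρ : ℝ) (hρ : 0 < ρ)
    (Flow : ℝ → ℝ)
    (hFlow : ∀ t : ℝ, Flow t =
      Real.exp (-(2*ρ)) * (∫ s in (0:ℝ)..(2/3), min t s * Real.sin (3 * π / 2 * s)) +
      Real.exp (2*ρ) * ∫ s in (2/3:ℝ)..1, min t s * Real.sin (3 * π / 2 * s)) :
    (ρ < 1/4 * Real.log 2 →
      0 < Flow (2 / (3 * π) * Real.arccos (Real.exp (4*ρ) - 1)) ∧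
      (2 / (3 * π) * Real.arccos (Real.exp (4*ρ) - 1)) ∈ Set.Icc (0:ℝ) 1 ∧
      ∀ t ∈ Set.Icc (0:ℝ) 1,
        Flow t ≤ Flow (2 / (3 * π) * Real.arccos (Real.exp (4*ρ) - 1))) ∧
    (1/4 * Real.log 2 ≤ ρ → ∀ t ∈ Set.Icc (0:ℝ) 1, Flow t ≤ 0) := by
  obtain rfl : Flow = FLow ρ := funext hFlow
  exact ⟨fun hsmall => ⟨FLow_peakTime_pos hρ hsmall,
      Icc_subset_Icc_right (by norm_num) (peakTime_mem_Icc ρ),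
      fun _ ht => isMaxOn_FLow_peakTime hρ hsmall.le ht⟩,
    fun hlarge _ ht => FLow_nonpos hlarge ht⟩
end

section
/- Let ρ > 0, let k be the Dirichlet Green's function k(t,s) = t(1−s) for t ≤ s and k(t,s) = s(1−t) for s ≤ t, and define F_low(t) := e^{−2ρ} ∫₀^{2/3} k(t,s) sin((3π/2)s) ds + e^{2ρ} ∫_{2/3}^{1} k(t,s) sin((3π/2)s) ds. If 0 < ρ < (1/4)·ln(4π/(π−2)), then, with t_ρ := (2/(3π))·arccos(e^{4ρ}·(π−2)/(3π) − 1/3), one has F_low(t_ρ) > 0 and F_low(t_ρ) = max_{t ∈ [0,1]} F_low(t). -/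
open MeasureTheory Set Real

/-!
With `ω = 3π/2`, splitting the integrals at `t` makes the function explicit. On `[0, 2/3]` it
is `e^{-2ρ} (sin φ - φ cos θ) / ω²` with `φ = ω t`, where `cos θ = e^{4ρ}(π - 2)/(3π) - 1/3` is
exactly the critical-point condition; as `sin` is strictly concave on `[0, π]`, it lies below its
tangent at `θ`, so `φ = θ` is the maximum there. On `[2/3, 1]` Jordan's inequality bounds the
function by an affine one that vanishes at `t = 1` and agrees with the lower piece at `t = 2/3`,
hence stays below the maximum.
-/

lemma integral_affine_mul_sin {ω : ℝ} (hω : ω ≠ 0) (c₁ c₂ A B : ℝ) :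
    ∫ s in A..B, (c₁ + c₂ * s) * sin (ω * s) =
      (-(c₁ + c₂ * B) * cos (ω * B) + c₂ * sin (ω * B) / ω) / ω -
      (-(c₁ + c₂ * A) * cos (ω * A) + c₂ * sin (ω * A) / ω) / ω := by
  refine intervalIntegral.integral_eq_sub_of_hasDerivAt
    (f := fun s => (-(c₁ + c₂ * s) * cos (ω * s) + c₂ * sin (ω * s) / ω) / ω) (fun s _ => ?_)
    ((by fun_prop : Continuous fun s => (c₁ + c₂ * s) * sin (ω * s)).intervalIntegrable A B)
  have hlin := (((hasDerivAt_id' s).const_mul c₂).const_add c₁).fun_neg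
  have hωs : HasDerivAt (fun s => ω * s) ω s := by simpa using (hasDerivAt_id s).const_mul ω
  refine (((hlin.mul hωs.cos).add ((hωs.sin.const_mul c₂).div_const ω)).div_const ω).congr_deriv ?_
  field_simp
  ring

noncomputable def dirichletGreen (t s : ℝ) : ℝ := if t ≤ s then t * (1 - s) else s * (1 - t)

lemma dirichletGreen_of_le {t s : ℝ} (h : t ≤ s) : dirichletGreen t s = t * (1 - s) := if_pos h

lemma dirichletGreen_of_ge {t s : ℝ} (h : s ≤ t) : dirichletGreen t s = s * (1 - t) := by
  rcases h.eq_or_lt with rfl | h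
  · exact dirichletGreen_of_le le_rfl
  · exact if_neg h.not_ge

lemma dirichletGreen_eq_min (t s : ℝ) : dirichletGreen t s = min (t * (1 - s)) (s * (1 - t)) := by
  rcases le_total t s with h | h
  · rw [dirichletGreen_of_le h, min_eq_left (by nlinarith)]
  · rw [dirichletGreen_of_ge h, min_eq_right (by nlinarith)]

lemma continuous_dirichletGreen (t : ℝ) : Continuous (dirichletGreen t) := by
  simp only [funext (dirichletGreen_eq_min t)]
  fun_prop

section GreenIntegrals

variable {f : ℝ → ℝ} {t A B : ℝ}

-- The right-hand sides have the shape `c₁ + c₂ * s` of `integral_affine_mul_sin`.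
lemma integral_dirichletGreen_mul_of_le (hAB : A ≤ B) (hBt : B ≤ t) :
    ∫ s in A..B, dirichletGreen t s * f s = ∫ s in A..B, (0 + (1 - t) * s) * f s := by
  refine intervalIntegral.integral_congr fun s hs => ?_
  rw [uIcc_of_le hAB] at hs
  simp only [dirichletGreen_of_ge (hs.2.trans hBt)]
  ring

lemma integral_dirichletGreen_mul_of_ge (hAB : A ≤ B) (htA : t ≤ A) :
    ∫ s in A..B, dirichletGreen t s * f s = ∫ s in A..B, (t + -t * s) * f s := by
  refine intervalIntegral.integral_congr fun s hs => ?_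
  rw [uIcc_of_le hAB] at hs
  simp only [dirichletGreen_of_le (htA.trans hs.1)]
  ring

lemma integral_dirichletGreen_mul_of_mem (hf : Continuous f) (hAt : A ≤ t) (htB : t ≤ B) :
    ∫ s in A..B, dirichletGreen t s * f s =
      (∫ s in A..t, (0 + (1 - t) * s) * f s) + ∫ s in t..B, (t + -t * s) * f s := by
  have hint (C D : ℝ) : IntervalIntegrable (fun s => dirichletGreen t s * f s) volume C D :=
    ((continuous_dirichletGreen t).mul hf).intervalIntegrable C D
  rw [← intervalIntegral.integral_add_adjacent_intervals (hint A t) (hint t B),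
    integral_dirichletGreen_mul_of_le hAt le_rfl, integral_dirichletGreen_mul_of_ge htB le_rfl]

end GreenIntegrals

noncomputable def weightedGreenSin (a b t : ℝ) : ℝ :=
  a * (∫ s in (0:ℝ)..(2/3), dirichletGreen t s * sin (3 * π / 2 * s)) +
    b * ∫ s in (2/3:ℝ)..1, dirichletGreen t s * sin (3 * π / 2 * s)

lemma weightedGreenSin_of_le {a b t : ℝ} (h₀ : 0 ≤ t) (h : t ≤ 2 / 3) :
    weightedGreenSin a b t =
      (a * sin (3 * π / 2 * t) + (a * π / 2 + b * (1 - π / 2)) * t) / (3 * π / 2) ^ 2 := by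
  have hω : 3 * π / 2 ≠ 0 := by positivity
  rw [weightedGreenSin, integral_dirichletGreen_mul_of_mem (by fun_prop) h₀ h,
    integral_dirichletGreen_mul_of_ge (by norm_num) h, integral_affine_mul_sin hω,
    integral_affine_mul_sin hω, integral_affine_mul_sin hω]
  have h₁ : 3 * π / 2 * (2 / 3) = π := by ring
  have h₂ : 3 * π / 2 * 1 = π / 2 + π := by ring
  simp only [h₁, h₂, mul_zero, sin_zero, cos_zero, sin_pi, cos_pi, sin_add_pi, cos_add_pi,
    sin_pi_div_two, cos_pi_div_two]
  field_simp
  ring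

lemma weightedGreenSin_of_ge {a b t : ℝ} (h : 2 / 3 ≤ t) (h₁ : t ≤ 1) :
    weightedGreenSin a b t =
      (a * π * (1 - t) + b * (sin (3 * π / 2 * t) + (π + 1) * t - π)) / (3 * π / 2) ^ 2 := by
  have hω : 3 * π / 2 ≠ 0 := by positivity
  rw [weightedGreenSin, integral_dirichletGreen_mul_of_le (by norm_num) h,
    integral_dirichletGreen_mul_of_mem (by fun_prop) h h₁, integral_affine_mul_sin hω,
    integral_affine_mul_sin hω, integral_affine_mul_sin hω]
  have h₁ : 3 * π / 2 * (2 / 3) = π := by ring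
  have h₂ : 3 * π / 2 * 1 = π / 2 + π := by ring
  simp only [h₁, h₂, mul_zero, sin_zero, cos_zero, sin_pi, cos_pi, sin_add_pi, cos_add_pi,
    sin_pi_div_two, cos_pi_div_two]
  field_simp
  ring

lemma sin_sub_mul_cos_lt {θ φ : ℝ} (hθ : θ ∈ Icc 0 π) (hφ : φ ∈ Icc 0 π) (hne : φ ≠ θ) :
    sin φ - φ * cos θ < sin θ - θ * cos θ := by
  rcases hne.lt_or_gt with h | h
  · have := strictConcaveOn_sin_Icc.lt_slope_of_hasDerivAt hφ hθ h (hasDerivAt_sin θ)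
    rw [slope_def_field, lt_div_iff₀ (sub_pos.2 h)] at this
    linarith
  · have := strictConcaveOn_sin_Icc.slope_lt_of_hasDerivAt hθ hφ h (hasDerivAt_sin θ)
    rw [slope_def_field, div_lt_iff₀ (sub_pos.2 h)] at this
    linarith

lemma sin_sub_mul_cos_le {θ φ : ℝ} (hθ : θ ∈ Icc 0 π) (hφ : φ ∈ Icc 0 π) :
    sin φ - φ * cos θ ≤ sin θ - θ * cos θ := by
  rcases eq_or_ne φ θ with rfl | hne
  · rfl
  · exact (sin_sub_mul_cos_lt hθ hφ hne).le

lemma sin_sub_mul_cos_pos {θ : ℝ} (hθ : θ ∈ Ioc 0 π) : 0 < sin θ - θ * cos θ := by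
  simpa using sin_sub_mul_cos_lt (Ioc_subset_Icc_self hθ) ⟨le_rfl, pi_pos.le⟩ hθ.1.ne

lemma sin_three_pi_div_two_mul_le {t : ℝ} (h : 2 / 3 ≤ t) (h₁ : t ≤ 1) :
    sin (3 * π / 2 * t) ≤ 2 - 3 * t := by
  have hψ : 2 / π * (3 * π / 2 * t - π) = 3 * t - 2 := by field_simp
  have hJordan :=
    mul_le_sin (x := 3 * π / 2 * t - π) (by nlinarith [pi_pos]) (by nlinarith [pi_pos])
  rw [hψ] at hJordan
  have := sin_sub_pi (3 * π / 2 * t)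
  linarith

-- `hcrit` says that `2θ/(3π)` is a critical point of the lower piece `weightedGreenSin_of_le`.
theorem weightedGreenSin_isMaxOn {a b θ : ℝ} (ha : 0 < a) (hb : 0 < b) (hθ : θ ∈ Ioo 0 π)
    (hcrit : a * π / 2 + b * (1 - π / 2) = -(a * (3 * π / 2) * cos θ)) :
    0 < weightedGreenSin a b (2 / (3 * π) * θ) ∧ 2 / (3 * π) * θ ∈ Icc 0 1 ∧
      IsMaxOn (weightedGreenSin a b) (Icc 0 1) (2 / (3 * π) * θ) := by
  have hπ := pi_pos
  have hθ' : θ ∈ Icc 0 π := Ioo_subset_Icc_self hθ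
  set M := a * (sin θ - θ * cos θ)
  have hM : 0 < M := mul_pos ha (sin_sub_mul_cos_pos (Ioo_subset_Ioc_self hθ))
  have hlow : ∀ t ∈ Icc (0 : ℝ) (2 / 3), weightedGreenSin a b t =
      a * (sin (3 * π / 2 * t) - 3 * π / 2 * t * cos θ) / (3 * π / 2) ^ 2 := by
    rintro t ⟨h₀, h⟩
    rw [weightedGreenSin_of_le h₀ h, hcrit]
    ring
  have hT : 2 / (3 * π) * θ ∈ Icc (0 : ℝ) (2 / 3) := by
    refine ⟨mul_nonneg (by positivity) hθ.1.le, ?_⟩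
    rw [div_mul_eq_mul_div, div_le_div_iff₀ (by positivity) (by norm_num)]
    nlinarith [hθ.2]
  have hMT : weightedGreenSin a b (2 / (3 * π) * θ) = M / (3 * π / 2) ^ 2 := by
    rw [hlow _ hT, show 3 * π / 2 * (2 / (3 * π) * θ) = θ by field_simp]
  have hle_low : ∀ t ∈ Icc (0 : ℝ) (2 / 3), weightedGreenSin a b t ≤ M / (3 * π / 2) ^ 2 := by
    intro t ht
    rw [hlow t ht]
    have hφ : 3 * π / 2 * t ∈ Icc 0 π := ⟨by nlinarith [ht.1], by nlinarith [ht.2]⟩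
    exact div_le_div_of_nonneg_right
      (mul_le_mul_of_nonneg_left (sin_sub_mul_cos_le hθ' hφ) ha.le) (by positivity)
  refine ⟨hMT ▸ by positivity, ⟨hT.1, hT.2.trans (by norm_num)⟩,
    isMaxOn_iff.2 fun t ⟨h₀, h₁⟩ => ?_⟩
  rw [hMT]
  rcases le_total t (2 / 3) with h | h
  · exact hle_low t ⟨h₀, h⟩
  · have hend : a * (0 - π * cos θ) ≤ M := by
      simpa using mul_le_mul_of_nonneg_left (sin_sub_mul_cos_le hθ' ⟨hπ.le, le_rfl⟩) ha.le
    rw [weightedGreenSin_of_ge h h₁]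
    gcongr
    have := mul_le_mul_of_nonneg_left (sin_three_pi_div_two_mul_le h h₁) hb.le
    nlinarith [mul_nonneg (by linarith : (0 : ℝ) ≤ 3 * t - 2) hM.le,
      mul_nonneg (by linarith : (0 : ℝ) ≤ 3 - 3 * t) (sub_nonneg.2 hend)]

theorem dirichlet_Flow_maximum_general
    (ρ : ℝ) (hρ' : ρ < 1/4 * Real.log (4 * π / (π - 2)))
    (k : ℝ → ℝ → ℝ)
    (hk : ∀ t s : ℝ, k t s = if t ≤ s then t * (1 - s) else s * (1 - t))
    (Flow : ℝ → ℝ)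
    (hFlow : ∀ t : ℝ, Flow t =
      Real.exp (-(2*ρ)) * (∫ s in (0:ℝ)..(2/3), k t s * Real.sin (3 * π / 2 * s)) +
      Real.exp (2*ρ) * ∫ s in (2/3:ℝ)..1, k t s * Real.sin (3 * π / 2 * s)) :
    0 < Flow (2 / (3 * π) * Real.arccos (Real.exp (4*ρ) * (π - 2) / (3 * π) - 1/3)) ∧
    (2 / (3 * π) * Real.arccos (Real.exp (4*ρ) * (π - 2) / (3 * π) - 1/3)) ∈ Set.Icc (0:ℝ) 1 ∧
    ∀ t ∈ Set.Icc (0:ℝ) 1, Flow t ≤ Flow (2 / (3 * π) * Real.arccos (Real.exp (4*ρ) * (π - 2) / (3 * π) - 1/3)) := by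
  have hk' : k = dirichletGreen := funext fun t => funext (hk t)
  have hFlow' : Flow = weightedGreenSin (exp (-(2 * ρ))) (exp (2 * ρ)) :=
    funext fun t => by rw [hFlow, hk', weightedGreenSin]
  have hπ : 2 < π := by linarith [pi_gt_three]
  set x := exp (4 * ρ) * (π - 2) / (3 * π) - 1 / 3 with hx
  have hexp : exp (4 * ρ) * (π - 2) < 4 * π := by
    rw [← lt_div_iff₀ (by linarith), ← exp_log (by positivity : 0 < 4 * π / (π - 2))]
    exact exp_lt_exp.2 (by linarith)
  have hx₁ : x < 1 := by
    rw [hx, sub_lt_iff_lt_add, div_lt_iff₀ (by positivity)]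
    linarith
  have hx₀ : -1 < x := by
    have : 0 < exp (4 * ρ) * (π - 2) / (3 * π) := by have := sub_pos.2 hπ; positivity
    linarith
  have hcrit : exp (-(2 * ρ)) * π / 2 + exp (2 * ρ) * (1 - π / 2) =
      -(exp (-(2 * ρ)) * (3 * π / 2) * cos (arccos x)) := by
    have hexp_add : exp (2 * ρ) = exp (-(2 * ρ)) * exp (4 * ρ) := by rw [← exp_add]; ring_nf
    rw [cos_arccos hx₀.le hx₁.le, hx, hexp_add]
    field_simp
    ring
  obtain ⟨hpos, hmem, hmax⟩ := weightedGreenSin_isMaxOn (exp_pos _) (exp_pos _)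
    ⟨arccos_pos.2 hx₁, arccos_lt_pi.2 hx₀⟩ hcrit
  rw [hFlow']
  exact ⟨hpos, hmem, isMaxOn_iff.1 hmax⟩

/-- For the Dirichlet Green's function: if 0 < rho < (1/4) ln(4 pi/(pi - 2)),
then F_low attains a positive maximum over [0,1] at
t_rho = (2/(3 pi)) arccos(exp(4 rho)(pi - 2)/(3 pi) - 1/3). -/
theorem dirichlet_Flow_maximum
    (ρ : ℝ) (hρ : 0 < ρ) (hρ' : ρ < 1/4 * Real.log (4 * π / (π - 2)))
    (k : ℝ → ℝ → ℝ)
    (hk : ∀ t s : ℝ, k t s = if t ≤ s then t * (1 - s) else s * (1 - t))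
    (Flow : ℝ → ℝ)
    (hFlow : ∀ t : ℝ, Flow t =
      Real.exp (-(2*ρ)) * (∫ s in (0:ℝ)..(2/3), k t s * Real.sin (3 * π / 2 * s)) +
      Real.exp (2*ρ) * ∫ s in (2/3:ℝ)..1, k t s * Real.sin (3 * π / 2 * s)) :
    0 < Flow (2 / (3 * π) * Real.arccos (Real.exp (4*ρ) * (π - 2) / (3 * π) - 1/3)) ∧
    (2 / (3 * π) * Real.arccos (Real.exp (4*ρ) * (π - 2) / (3 * π) - 1/3)) ∈ Set.Icc (0:ℝ) 1 ∧
    ∀ t ∈ Set.Icc (0:ℝ) 1, Flow t ≤ Flow (2 / (3 * π) * Real.arccos (Real.exp (4*ρ) * (π - 2) / (3 * π) - 1/3)) :=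
  dirichlet_Flow_maximum_general ρ hρ' k hk Flow hFlow
end
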